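/- Let d ≥ 2 be an integer, p ∈ (0,1) and μ_2 ∈ ℝ. Let r be a pmf on {0,…,d} supported on exactly two points, with Σ_j j·r(j) = pd, and let μ_2^r = (Σ_j j²·r(j) − pd)/(d(d−1)) be its induced second-order cross moment. Then r is an extreme point of D(p, μ_2) = {pmfs q on {0,…,d} : Σ_j j·q(j) = pd, Σ_j j²·q(j) = pd + d(d−1)μ_2} if and only if r is an extreme point of D(dp) = {pmfs q on {0,…,d} : Σ_j j·q(j) = pd} and μ_2^r = μ_2. -/

import Mathlib

/-!
Both sides force `r` into `D(p, μ₂)`, which happens exactly when `μ₂^r = μ₂`; so it suffices that a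
two-point pmf `r` with mean `dp` is extreme in `D(dp)`, hence also in the smaller set `D(p, μ₂)`.
Nonnegativity forces any `q` in an open segment through `r` to vanish off the support `{i, j}` of
`r`, and then the equations `q i + q j = 1`, `i q i + j q j = dp` determine `q` uniquely.
-/

open Finset

section PmfsWithMean

variable {ι : Type*}

def pmfsWithMean [Fintype ι] (f : ι → ℝ) (m : ℝ) : Set (ι → ℝ) :=
  {q | (∀ l, 0 ≤ q l) ∧ ∑ l, q l = 1 ∧ ∑ l, f l * q l = m}

lemma apply_eq_zero_of_mem_openSegment {x y r : ι → ℝ} (hx : ∀ l, 0 ≤ x l) (hy : ∀ l, 0 ≤ y l)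
    (hr : r ∈ openSegment ℝ x y) {l : ι} (hrl : r l = 0) : x l = 0 := by
  obtain ⟨a, b, ha, hb, -, rfl⟩ := hr
  have hxl := hx l
  have hyl := hy l
  simp only [Pi.add_apply, Pi.smul_apply, smul_eq_mul] at hrl
  nlinarith [mul_nonneg ha.le hxl, mul_nonneg hb.le hyl]

lemma sum_mul_eq_of_support_subset_pair [Fintype ι] {i j : ι} (hij : i ≠ j)
    {q : ι → ℝ} (hq : ∀ l, l ≠ i → l ≠ j → q l = 0) (f : ι → ℝ) :
    ∑ l, f l * q l = f i * q i + f j * q j := by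
  classical
  rw [← sum_pair (f := fun l => f l * q l) hij]
  refine (sum_subset (subset_univ _) fun l _ hl => ?_).symm
  simp only [mem_insert, mem_singleton, not_or] at hl
  rw [hq l hl.1 hl.2, mul_zero]

lemma eq_of_mem_pmfsWithMean_of_support_subset_pair [Fintype ι] {f : ι → ℝ} {m : ℝ}
    {i j : ι} (hf : f i ≠ f j) {q r : ι → ℝ} (hq : q ∈ pmfsWithMean f m)
    (hr : r ∈ pmfsWithMean f m) (hq₀ : ∀ l, l ≠ i → l ≠ j → q l = 0)
    (hr₀ : ∀ l, l ≠ i → l ≠ j → r l = 0) : q = r := by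
  have hij : i ≠ j := fun h => hf (congrArg f h)
  have hpair := fun {s : ι → ℝ} => @sum_mul_eq_of_support_subset_pair _ _ _ _ hij s
  have hq₁ : q i + q j = 1 := by simpa [hq.2.1] using (hpair hq₀ fun _ => 1).symm
  have hr₁ : r i + r j = 1 := by simpa [hr.2.1] using (hpair hr₀ fun _ => 1).symm
  have hqm : f i * q i + f j * q j = m := (hpair hq₀ f).symm.trans hq.2.2
  have hrm : f i * r i + f j * r j = m := (hpair hr₀ f).symm.trans hr.2.2
  have hi : (f i - f j) * (q i - r i) = 0 := by
    linear_combination hqm - hrm - f j * hq₁ + f j * hr₁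
  have hqi : q i = r i := by
    simpa [sub_eq_zero, hf] using hi
  funext l
  by_cases hli : l = i
  · subst hli; exact hqi
  by_cases hlj : l = j
  · subst hlj; linarith
  rw [hq₀ l hli hlj, hr₀ l hli hlj]

lemma mem_extremePoints_pmfsWithMean_of_card_support_eq_two [Fintype ι] {f : ι → ℝ} {m : ℝ}
    (hf : Function.Injective f) {r : ι → ℝ} (hr : r ∈ pmfsWithMean f m)
    (hsupp : (univ.filter fun l => r l ≠ 0).card = 2) :
    r ∈ Set.extremePoints ℝ (pmfsWithMean f m) := by
  classical
  obtain ⟨i, j, hij, hS⟩ := card_eq_two.mp hsupp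
  have hr₀ : ∀ l, l ≠ i → l ≠ j → r l = 0 := fun l hli hlj => by
    by_contra hl
    have : l ∈ univ.filter fun l => r l ≠ 0 := by simpa using hl
    simp [hS, hli, hlj] at this
  refine ⟨hr, fun q hq y hy hseg => ?_⟩
  refine eq_of_mem_pmfsWithMean_of_support_subset_pair (hf.ne hij) hq hr (fun l hli hlj => ?_) hr₀
  exact apply_eq_zero_of_mem_openSegment hq.1 hy.1 hseg (hr₀ l hli hlj)

end PmfsWithMean

theorem stmt_12_general (d : ℕ) (hd : 2 ≤ d) (p : ℝ) (μ2 : ℝ)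
    (r : Fin (d + 1) → ℝ) (hr0 : ∀ l, 0 ≤ r l) (hr1 : ∑ l, r l = 1)
    (hsupp : (Finset.univ.filter (fun l => r l ≠ 0)).card = 2)
    (hrmean : ∑ l, (l.val : ℝ) * r l = p * d)
    (μ2r : ℝ)
    (hμ2r : μ2r = ((∑ l, (l.val : ℝ) ^ 2 * r l) - p * d) / ((d : ℝ) * ((d : ℝ) - 1)))
    (Dpρ : Set (Fin (d + 1) → ℝ))
    (hDpρ : Dpρ = {q : Fin (d + 1) → ℝ |
      (∀ l, 0 ≤ q l) ∧ (∑ l, q l = 1) ∧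
      (∑ l, (l.val : ℝ) * q l = p * d) ∧
      (∑ l, (l.val : ℝ) ^ 2 * q l = p * d + (d : ℝ) * ((d : ℝ) - 1) * μ2)})
    (Dp : Set (Fin (d + 1) → ℝ))
    (hDp : Dp = {q : Fin (d + 1) → ℝ |
      (∀ l, 0 ≤ q l) ∧ (∑ l, q l = 1) ∧ (∑ l, (l.val : ℝ) * q l = p * d)}) :
    r ∈ Set.extremePoints ℝ Dpρ ↔ (r ∈ Set.extremePoints ℝ Dp ∧ μ2r = μ2) := by
  have hDp' : Dp = pmfsWithMean (fun l : Fin (d + 1) => (l.val : ℝ)) (p * d) := hDp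
  have hext : r ∈ Set.extremePoints ℝ Dp := hDp' ▸
    mem_extremePoints_pmfsWithMean_of_card_support_eq_two
      (Nat.cast_injective.comp Fin.val_injective) ⟨hr0, hr1, hrmean⟩ hsupp
  have hsub : Dpρ ⊆ Dp := by
    rw [hDpρ, hDp]
    exact fun q hq => ⟨hq.1, hq.2.1, hq.2.2.1⟩
  have hd' : (d : ℝ) * ((d : ℝ) - 1) ≠ 0 := by
    have : (2 : ℝ) ≤ d := by exact_mod_cast hd
    apply mul_ne_zero <;> linarith
  have hmem : r ∈ Dpρ ↔ μ2r = μ2 := by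
    rw [hDpρ, hμ2r, div_eq_iff hd']
    simp only [Set.mem_ofPred_eq, hr0, hr1, hrmean, implies_true, true_and]
    constructor <;> intro h <;> linarith
  exact ⟨fun h => ⟨hext, hmem.1 h.1⟩,
    fun h => inter_extremePoints_subset_extremePoints_of_subset hsub ⟨hmem.2 h.2, hext⟩⟩

/-- A pmf `r` on `{0,…,d}` supported on exactly two points with mean `pd`, with
induced cross moment `μ₂^r = (∑ j² r(j) − pd)/(d(d−1))`, is an extreme point of `D(p,μ₂)` iff
it is an extreme point of `D(dp)` and `μ₂^r = μ₂`. -/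
theorem stmt_12 (d : ℕ) (hd : 2 ≤ d) (p : ℝ) (hp : p ∈ Set.Ioo (0 : ℝ) 1) (μ2 : ℝ)
    (r : Fin (d + 1) → ℝ) (hr0 : ∀ l, 0 ≤ r l) (hr1 : ∑ l, r l = 1)
    (hsupp : (Finset.univ.filter (fun l => r l ≠ 0)).card = 2)
    (hrmean : ∑ l, (l.val : ℝ) * r l = p * d)
    (μ2r : ℝ)
    (hμ2r : μ2r = ((∑ l, (l.val : ℝ) ^ 2 * r l) - p * d) / ((d : ℝ) * ((d : ℝ) - 1)))
    (Dpρ : Set (Fin (d + 1) → ℝ))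
    (hDpρ : Dpρ = {q : Fin (d + 1) → ℝ |
      (∀ l, 0 ≤ q l) ∧ (∑ l, q l = 1) ∧
      (∑ l, (l.val : ℝ) * q l = p * d) ∧
      (∑ l, (l.val : ℝ) ^ 2 * q l = p * d + (d : ℝ) * ((d : ℝ) - 1) * μ2)})
    (Dp : Set (Fin (d + 1) → ℝ))
    (hDp : Dp = {q : Fin (d + 1) → ℝ |
      (∀ l, 0 ≤ q l) ∧ (∑ l, q l = 1) ∧ (∑ l, (l.val : ℝ) * q l = p * d)}) :
    r ∈ Set.extremePoints ℝ Dpρ ↔ (r ∈ Set.extremePoints ℝ Dp ∧ μ2r = μ2) :=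
  stmt_12_general d hd p μ2 r hr0 hr1 hsupp hrmean μ2r hμ2r Dpρ hDpρ Dp hDp
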